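/- arXiv:1504.02179 — 9 statements merged into one kernel-verified Lean document; each statement's English description precedes it below -/
import Mathlib

section
/- If there is an injection from A × Fin (N+1) to B × Fin (N+1), then there is an injection from A × Fin N to B × Fin N. -/
/-- Inductive step: an injection `A × Fin (N+1) → B × Fin (N+1)` yields an
injection `A × Fin N → B × Fin N`. -/
theorem division_step {A B : Type*} (N : ℕ)
    (f : A × Fin (N + 1) → B × Fin (N + 1)) (hf : Function.Injective f) :
    ∃ g : A × Fin N → B × Fin N, Function.Injective g := by
  classical
  rcases Nat.eq_zero_or_pos N with rfl | hN
  · exact ⟨fun x => x.2.elim0, fun x => x.2.elim0⟩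
  -- it suffices to embed A into B
  suffices h : Nonempty (A ↪ B) by
    obtain ⟨e⟩ := h
    exact ⟨Prod.map e id, Function.Injective.prodMap e.injective Function.injective_id⟩
  by_cases hB : Finite B
  · have hAf : Finite (A × Fin (N + 1)) := by
      haveI : Finite (B × Fin (N + 1)) := Finite.instProd
      exact Finite.of_injective f hf
    haveI : Finite A := Finite.of_injective (fun a : A => ((a, 0) : A × Fin (N + 1)))
      (fun a b h => by simpa using congrArg Prod.fst h)
    haveI : Finite B := hB
    haveI := Fintype.ofFinite A
    haveI := Fintype.ofFinite B
    have hcard : Fintype.card A * (N + 1) ≤ Fintype.card B * (N + 1) := by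
      have := Fintype.card_le_of_injective f hf
      simpa [Fintype.card_prod] using this
    have : Fintype.card A ≤ Fintype.card B :=
      Nat.le_of_mul_le_mul_right hcard (Nat.succ_pos N)
    exact Function.Embedding.nonempty_of_card_le this
  · haveI : Infinite B := not_finite_iff_infinite.mp hB
    have h1 : (Cardinal.mk (B × Fin (N + 1))) = Cardinal.mk B := by
      rw [Cardinal.mk_prod, Cardinal.mk_fin, Cardinal.lift_natCast, Cardinal.lift_id',
        Cardinal.mul_eq_left (Cardinal.aleph0_le_mk B)
          ((Cardinal.nat_lt_aleph0 (N + 1)).le.trans (Cardinal.aleph0_le_mk B)) (by simp)]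
    obtain ⟨e⟩ := Cardinal.eq.mp h1
    exact ⟨⟨fun a => e (f (a, 0)), fun a b h => by
      have h2 := hf (e.injective h)
      simpa using congrArg Prod.fst h2⟩⟩
end

section
/- If there is a bijection between A × Fin N and B × Fin N for some positive natural N, then there is a bijection between A and B. -/
/-- Division for bijections: a bijection `A × Fin N ≃ B × Fin N` with `N` positive
yields a bijection `A ≃ B`. -/
theorem equiv_div {A B : Type*} (N : ℕ) (hN : 0 < N)
    (e : A × Fin N ≃ B × Fin N) : Nonempty (A ≃ B) := by
  rw [← Cardinal.lift_mk_eq']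
  have h : Cardinal.lift.{u_2} (Cardinal.mk A) * N = Cardinal.lift.{u_1} (Cardinal.mk B) * N := by
    have := Cardinal.lift_mk_eq'.mpr ⟨e⟩
    simpa [Cardinal.mk_prod, Cardinal.lift_mul, Cardinal.mk_fin] using this
  cases finite_or_infinite A with
  | inl hA =>
    have : Finite (A × Fin N) := Finite.instProd
    have hB' : Finite (B × Fin N) := Finite.of_equiv _ e
    have : Nonempty (Fin N) := ⟨⟨0, hN⟩⟩
    have hB : Finite B := Finite.prod_left (Fin N)
    have := Fintype.ofFinite A
    have := Fintype.ofFinite B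
    have hcard : Fintype.card A * N = Fintype.card B * N := by
      have := Fintype.card_congr e
      simpa [Fintype.card_prod] using this
    have hc : Fintype.card A = Fintype.card B :=
      Nat.eq_of_mul_eq_mul_right hN hcard
    simp [Cardinal.mk_fintype, hc]
  | inr hA =>
    have hB : Infinite B := by
      rcases finite_or_infinite B with hB | hB
      · exfalso
        have : Finite (B × Fin N) := Finite.instProd
        have : Finite (A × Fin N) := Finite.of_equiv _ e.symm
        have : Nonempty (Fin N) := ⟨⟨0, hN⟩⟩
        have : Finite A := Finite.prod_left (Fin N)
        exact not_finite A
      · exact hB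
    have hNne : (N : Cardinal) ≠ 0 := by exact_mod_cast hN.ne'
    have h1 : Cardinal.aleph0 ≤ Cardinal.lift.{u_2} (Cardinal.mk A) := by
      simpa using Cardinal.lift_le.mpr (Cardinal.infinite_iff.mp hA)
    have h2 : Cardinal.aleph0 ≤ Cardinal.lift.{u_1} (Cardinal.mk B) := by
      simpa using Cardinal.lift_le.mpr (Cardinal.infinite_iff.mp hB)
    rw [Cardinal.mul_eq_left h1 ((Cardinal.nat_lt_aleph0 N).le.trans h1) hNne,
        Cardinal.mul_eq_left h2 ((Cardinal.nat_lt_aleph0 N).le.trans h2) hNne] at h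
    exact h
end

section
/- If A × Fin 4 injects into B × Fin 4, then A × Fin 3 injects into B × Fin 3. -/
private lemma embed_of_embed_prod_four {A B : Type u}
    (f : A × Fin 4 → B × Fin 4) (hf : Function.Injective f) :
    Nonempty (A ↪ B) := by
  cases finite_or_infinite B with
  | inl hB =>
    have hA4 : Finite (A × Fin 4) := Finite.of_injective f hf
    have hA : Finite A :=
      Finite.of_injective (fun a : A => ((a, 0) : A × Fin 4)) (by
        intro a b h; exact (Prod.mk.injEq _ _ _ _ ▸ h).1)
    have hcard : Nat.card (A × Fin 4) ≤ Nat.card (B × Fin 4) :=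
      Nat.card_le_card_of_injective f hf
    rw [Nat.card_prod, Nat.card_prod, Nat.card_eq_fintype_card (α := Fin 4)] at hcard
    simp only [Fintype.card_fin] at hcard
    have h4 : Nat.card A ≤ Nat.card B := Nat.le_of_mul_le_mul_right hcard (by norm_num)
    classical
    have := Fintype.ofFinite A
    have := Fintype.ofFinite B
    rw [Nat.card_eq_fintype_card, Nat.card_eq_fintype_card] at h4
    exact Function.Embedding.nonempty_of_card_le h4
  | inr hB =>
    have hle : Cardinal.mk (A × Fin 4) ≤ Cardinal.mk (B × Fin 4) :=
      Cardinal.mk_le_of_injective hf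
    have ea : Cardinal.mk (A × Fin 4) = Cardinal.mk A * 4 := by simp [Cardinal.mk_prod]
    have eb : Cardinal.mk (B × Fin 4) = Cardinal.mk B * 4 := by simp [Cardinal.mk_prod]
    have hb : Cardinal.aleph0 ≤ Cardinal.mk B := Cardinal.infinite_iff.mp hB
    have h1 : Cardinal.mk A ≤ Cardinal.mk A * 4 := by
      calc Cardinal.mk A = Cardinal.mk A * 1 := (mul_one _).symm
        _ ≤ Cardinal.mk A * 4 := by apply mul_le_mul_right; norm_num
    have h2 : Cardinal.mk B * 4 = Cardinal.mk B := by
      apply Cardinal.mul_eq_left hb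
      · exact le_trans (le_of_lt (Cardinal.nat_lt_aleph0 4)) hb
      · norm_num
    have : Cardinal.mk A ≤ Cardinal.mk B := by
      calc Cardinal.mk A ≤ Cardinal.mk A * 4 := h1
        _ = Cardinal.mk (A × Fin 4) := ea.symm
        _ ≤ Cardinal.mk (B × Fin 4) := hle
        _ = Cardinal.mk B * 4 := eb
        _ = Cardinal.mk B := h2
    exact (Cardinal.le_def _ _).mp this

private lemma embed_of_embed_prod_four' {A : Type u} {B : Type v}
    (f : A × Fin 4 → B × Fin 4) (hf : Function.Injective f) :
    Nonempty (A ↪ B) := by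
  let f' : ULift.{v} A × Fin 4 → ULift.{u} B × Fin 4 :=
    fun p => (ULift.up (f (p.1.down, p.2)).1, (f (p.1.down, p.2)).2)
  have hf' : Function.Injective f' := by
    intro ⟨a, i⟩ ⟨b, j⟩ h
    simp only [f', Prod.mk.injEq, ULift.up_inj] at h
    have h2 := hf (Prod.ext h.1 h.2)
    simp only [Prod.mk.injEq] at h2
    exact Prod.ext (ULift.down_inj.mp h2.1) h2.2
  obtain ⟨e⟩ := embed_of_embed_prod_four f' hf'
  exact ⟨(Equiv.ulift.symm.toEmbedding.trans e).trans Equiv.ulift.toEmbedding⟩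

/-- The `N = 4` (Pan Galactic card game) case of the inductive step:
an injection `A × Fin 4 → B × Fin 4` yields an injection `A × Fin 3 → B × Fin 3`. -/
theorem division_four_to_three {A B : Type*}
    (f : A × Fin 4 → B × Fin 4) (hf : Function.Injective f) :
    ∃ g : A × Fin 3 → B × Fin 3, Function.Injective g := by
  obtain ⟨e⟩ := embed_of_embed_prod_four' f hf
  refine ⟨fun p => (e p.1, p.2), ?_⟩
  intro ⟨a, i⟩ ⟨b, j⟩ h
  simp only [Prod.mk.injEq] at h
  exact Prod.ext (e.injective h.1) h.2
end

section
/- Let f : A × Fin N → B × Fin N be an injection with N ≥ 1. If for every a : A and every i : Fin N with i ≠ 0, the second component of f (a, i) is not the distinguished suit (N-1), then the map sending (a, i) for i in Fin (N-1) to f (a, i+1) (reinterpreting the suit component in Fin (N-1)) is a well-defined injection from A × Fin (N-1) to B × Fin (N-1). -/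
/-- Final step of the Doyle–Qiu argument, for `N + 1 ≥ 1` with distinguished
suit `Fin.last N` (the "spades") and leftmost spot `0`: if an injection
`f : A × Fin (N+1) → B × Fin (N+1)` never puts a spade in a non-leftmost spot,
then sending `(a, i)` with `i : Fin N` to `f (a, i.succ)`, with the suit
component reinterpreted in `Fin N`, is a well-defined injection
`A × Fin N → B × Fin N`. -/
theorem restrict_no_bad_spades {A B : Type*} (N : ℕ)
    (f : A × Fin (N + 1) → B × Fin (N + 1)) (hf : Function.Injective f)
    (hns : ∀ (a : A) (i : Fin (N + 1)), i ≠ 0 → (f (a, i)).2 ≠ Fin.last N) :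
    ∃ g : A × Fin N → B × Fin N, Function.Injective g ∧
      ∀ (a : A) (i : Fin N), (g (a, i)).1 = (f (a, i.succ)).1 ∧
        ((g (a, i)).2 : ℕ) = ((f (a, i.succ)).2 : ℕ) := by
  have hlt : ∀ (a : A) (i : Fin N), ((f (a, i.succ)).2 : ℕ) < N := by
    intro a i
    have h := hns a i.succ (Fin.succ_ne_zero i)
    have h2 : ((f (a, i.succ)).2 : ℕ) ≠ N := by
      simpa [Fin.ext_iff] using h
    have := (f (a, i.succ)).2.isLt
    omega
  refine ⟨fun p => ((f (p.1, p.2.succ)).1, ⟨((f (p.1, p.2.succ)).2 : ℕ), hlt p.1 p.2⟩),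
    ?_, fun a i => ⟨rfl, rfl⟩⟩
  rintro ⟨a, i⟩ ⟨b, j⟩ h
  simp only [Prod.mk.injEq, Fin.mk.injEq] at h
  have : f (a, i.succ) = f (b, j.succ) := by
    ext
    · exact h.1
    · exact h.2
  have := hf this
  simp only [Prod.mk.injEq, Fin.succ_inj] at this
  exact Prod.ext this.1 this.2
end

section
/- The card called for during Ship Out is never a spade: for a named hand whose leftmost bad spade is in spot i with i ≠ 0, the requested card (n, i) has suit i ≠ 3 when interpreted appropriately; consequently the leftmost spade of a named hand is never removed by Ship Out, and a player shapes up at most once. -/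
open Finset

variable {A B : Type*}

/-- The spots of a hand holding a spade (suit `3`). -/
def spadeSpots (h : Fin 4 → B × Fin 4) : Finset (Fin 4) :=
  Finset.univ.filter (fun i => (h i).2 = 3)

/-- Shape Up: swap spot `0` with the least spot holding a spade, if any. -/
def shapeUp (h : Fin 4 → B × Fin 4) : Fin 4 → B × Fin 4 :=
  if hs : (spadeSpots h).Nonempty then h ∘ (Equiv.swap 0 ((spadeSpots h).min' hs)) else h

/-- Bad spades: spades lying in a spot other than the leftmost spot `0`. -/
def badSpades (h : Fin 4 → B × Fin 4) : Finset (Fin 4) :=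
  Finset.univ.filter (fun i => i ≠ 0 ∧ (h i).2 = 3)

/-- The spot of the leftmost bad spade (junk value `0` if there is none). -/
def leftBad (h : Fin 4 → B × Fin 4) : Fin 4 :=
  if hb : (badSpades h).Nonempty then (badSpades h).min' hb else 0

/-- The card a player with a bad spade calls for: its name is the name of the hand
(the name of the leftmost spade, in spot `0`), and its suit is the suit `3 - i`
named by the spot `i` of the leftmost bad spade. -/
def request (h : Fin 4 → B × Fin 4) : B × Fin 4 :=
  ((h 0).1, 3 - leftBad h)

/-- Ship Out, seen from one hand: replace the leftmost bad spade by the requested card. -/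
def shipOutHand (h : Fin 4 → B × Fin 4) : Fin 4 → B × Fin 4 :=
  if (badSpades h).Nonempty then Function.update h (leftBad h) (request h) else h

/-- The hand of player `a` under the global assignment `f`. -/
def hand (f : A × Fin 4 → B × Fin 4) (a : A) : Fin 4 → B × Fin 4 :=
  fun i => f (a, i)

/-- The global Shape Up round: every player shapes up simultaneously. -/
def gShapeUp (f : A × Fin 4 → B × Fin 4) : A × Fin 4 → B × Fin 4 :=
  fun p => shapeUp (hand f p.1) p.2

/-- A player is active in the Ship Out round if her hand is named
(spade in spot `0`) and contains a bad spade. -/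
def isActive (f : A × Fin 4 → B × Fin 4) (a : A) : Prop :=
  (f (a, 0)).2 = 3 ∧ (badSpades (hand f a)).Nonempty

open Classical in
/-- The global Ship Out round: every active player swaps her leftmost bad spade
with the card she calls for, wherever that card is. -/
noncomputable def gShipOut (f : A × Fin 4 → B × Fin 4) : A × Fin 4 → B × Fin 4 :=
  fun p =>
    if isActive f p.1 ∧ p.2 = leftBad (hand f p.1) then request (hand f p.1)
    else if h : ∃ a', isActive f a' ∧ request (hand f a') = f p then
      f (h.choose, leftBad (hand f h.choose))
    else f p

/-- The game: alternate Shape Up and Ship Out rounds, starting with Shape Up. -/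
noncomputable def gameSeq (f : A × Fin 4 → B × Fin 4) : ℕ → (A × Fin 4 → B × Fin 4)
  | 0 => f
  | (k + 1) => if k % 2 = 0 then gShapeUp (gameSeq f k) else gShipOut (gameSeq f k)

open Classical in
/-- The score of a hand: the number of spots `i` holding the card whose name is the
name of the hand and whose suit `3 - i` is the suit named by spot `i`. -/
noncomputable def score (h : Fin 4 → B × Fin 4) : ℕ :=
  (Finset.univ.filter (fun i => h i = ((h 0).1, 3 - i))).card

/-- The requested card is never a spade, so Ship Out never removes the leftmost
spade of a named hand, and a hand already shaped up stays shaped up (a player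
shapes up at most once). -/
theorem request_not_spade (h : Fin 4 → B × Fin 4)
    (hn : (h 0).2 = 3) (hb : (badSpades h).Nonempty) :
    (request h).2 ≠ 3 ∧ shipOutHand h 0 = h 0 ∧
      shapeUp (shipOutHand h) = shipOutHand h := by
  have hmem : leftBad h ∈ badSpades h := by
    rw [leftBad, dif_pos hb]; exact (badSpades h).min'_mem hb
  rw [badSpades, Finset.mem_filter] at hmem
  obtain ⟨-, hne, -⟩ := hmem
  have h1 : (request h).2 ≠ 3 := by
    simp only [request]
    intro hc
    apply hne
    revert hc
    generalize leftBad h = i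
    fin_cases i <;> decide
  have h2 : shipOutHand h 0 = h 0 := by
    rw [shipOutHand, if_pos hb, Function.update_of_ne (Ne.symm hne)]
  refine ⟨h1, h2, ?_⟩
  have hs0 : (0 : Fin 4) ∈ spadeSpots (shipOutHand h) := by
    rw [spadeSpots, Finset.mem_filter, h2]
    exact ⟨Finset.mem_univ _, hn⟩
  have hsne : (spadeSpots (shipOutHand h)).Nonempty := ⟨0, hs0⟩
  have hmin : (spadeSpots (shipOutHand h)).min' hsne = 0 :=
    le_antisymm (Finset.min'_le _ _ hs0) (Fin.zero_le _)
  rw [shapeUp, dif_pos hsne, hmin, Equiv.swap_self]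
  rfl
end

section
/- Define the score of a named hand with name n as the number of spots i such that the card in spot i is (n, s(i)) where s(i) is the suit named by spot i. Shipping out a bad spade strictly increases the score of the shipping player's hand. -/
open Finset

variable {A B : Type*}

/-- Shipping out a bad spade strictly increases the score of the hand. -/
theorem shipOut_score_lt (h : Fin 4 → B × Fin 4)
    (hn : (h 0).2 = 3) (hb : (badSpades h).Nonempty) :
    score h < score (shipOutHand h) := by
  classical
  set j := leftBad h with hj
  have hjmem : j ∈ badSpades h := by
    rw [hj, leftBad, dif_pos hb]; exact (badSpades h).min'_mem hb
  have hj0 : j ≠ 0 := (Finset.mem_filter.mp hjmem).2.1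
  have hjs : (h j).2 = 3 := (Finset.mem_filter.mp hjmem).2.2
  have key : ∀ k : Fin 4, k ≠ 0 → (3 : Fin 4) - k ≠ 3 := by decide
  have hsub3 : (3 : Fin 4) - j ≠ 3 := key j hj0
  have hship : shipOutHand h = Function.update h j ((h 0).1, 3 - j) := by
    rw [shipOutHand, if_pos hb]; rfl
  unfold score
  rw [hship]
  have h0 : Function.update h j ((h 0).1, 3 - j) 0 = h 0 :=
    Function.update_of_ne (Ne.symm hj0) _ _
  apply Finset.card_lt_card
  constructor
  · intro i hi
    rw [Finset.mem_filter] at hi ⊢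
    have hij : i ≠ j := by
      intro e
      subst e
      have := congrArg Prod.snd hi.2
      simp only at this
      rw [hjs] at this
      exact hsub3 this.symm
    refine ⟨Finset.mem_univ _, ?_⟩
    rw [Function.update_of_ne hij, h0]
    exact hi.2
  · intro hss
    have hjnew : j ∈ Finset.univ.filter
        (fun i => Function.update h j ((h 0).1, 3 - j) i =
          ((Function.update h j ((h 0).1, 3 - j) 0).1, 3 - i)) := by
      rw [Finset.mem_filter]
      refine ⟨Finset.mem_univ _, ?_⟩
      rw [Function.update_self, h0]
    have hjold := hss hjnew
    rw [Finset.mem_filter] at hjold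
    have := congrArg Prod.snd hjold.2
    simp only at this
    rw [hjs] at this
    exact hsub3 this.symm
end

section
/- The score of a named hand is at most 4, and a hand with score 4 contains no bad spades; hence a hand of score 4 is fixed by both Shape Up and Ship Out. -/
open Finset

variable {A B : Type*}

section Hand

variable (h : Fin 4 → B × Fin 4)

theorem score_le_card : score h ≤ Fintype.card (Fin 4) :=
  card_le_univ _

theorem score_eq_four_iff : score h = 4 ↔ ∀ i, h i = ((h 0).1, 3 - i) := by
  classical
  simpa only [score, Fintype.card_fin, filter_eq_self, mem_univ, true_implies]
    using card_eq_iff_eq_univ (univ.filter fun i => h i = ((h 0).1, 3 - i))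

variable {h}

theorem badSpades_eq_empty_of_suit_eq (hs : ∀ i, (h i).2 = 3 - i) : badSpades h = ∅ := by
  refine filter_eq_empty_iff.mpr fun i _ ⟨hi, h3⟩ => hi ?_
  rwa [hs i, sub_eq_self] at h3

theorem shapeUp_eq_self_of_spade_zero (h0 : (h 0).2 = 3) : shapeUp h = h := by
  have h0mem : 0 ∈ spadeSpots h := mem_filter.mpr ⟨mem_univ _, h0⟩
  have hmin : (spadeSpots h).min' ⟨0, h0mem⟩ = 0 :=
    le_antisymm (min'_le _ _ h0mem) (Fin.zero_le _)
  rw [shapeUp, dif_pos ⟨0, h0mem⟩, hmin, Equiv.swap_self, Equiv.coe_refl, Function.comp_id]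

theorem shipOutHand_eq_self_of_badSpades_eq_empty (hb : badSpades h = ∅) :
    shipOutHand h = h := by
  rw [shipOutHand, hb, if_neg Finset.not_nonempty_empty]

end Hand

theorem score_le_four_general (h : Fin 4 → B × Fin 4) :
    score h ≤ 4 ∧
      (score h = 4 → badSpades h = ∅ ∧ shapeUp h = h ∧ shipOutHand h = h) := by
  refine ⟨(score_le_card h).trans_eq (Fintype.card_fin 4), fun h4 => ?_⟩
  have hs : ∀ i, (h i).2 = 3 - i := fun i => by rw [(score_eq_four_iff h).mp h4 i]
  have hb := badSpades_eq_empty_of_suit_eq hs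
  exact ⟨hb, shapeUp_eq_self_of_spade_zero ((hs 0).trans (sub_zero 3)),
    shipOutHand_eq_self_of_badSpades_eq_empty hb⟩

/-- The score of a named hand is at most `4`, and a hand of score `4` has no bad
spades, hence is fixed by both Shape Up and Ship Out. -/
theorem score_le_four (h : Fin 4 → B × Fin 4) (hn : (h 0).2 = 3) :
    score h ≤ 4 ∧
      (score h = 4 → badSpades h = ∅ ∧ shapeUp h = h ∧ shipOutHand h = h) :=
  score_le_four_general h
end

section
/- Once a player's hand has stabilized (is unchanged in all subsequent rounds), it contains no bad spades: no spade occupies any spot other than the leftmost spot. -/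
open Finset

variable {A B : Type*}

/-- A stabilized hand contains no bad spades: no spade occupies a non-leftmost spot. -/
theorem stabilized_no_bad_spades (f : A × Fin 4 → B × Fin 4)
    (hf : Function.Injective f) (a : A) (K : ℕ)
    (hstab : ∀ k, K ≤ k → hand (gameSeq f k) a = hand (gameSeq f K) a) :
    badSpades (hand (gameSeq f K) a) = ∅ := by

  by_contra hne
  set h := hand (gameSeq f K) a with hh
  have hb : (badSpades h).Nonempty := Finset.nonempty_iff_ne_empty.2 hne
  have e1 : hand (gameSeq f (2*K+1)) a = shapeUp (hand (gameSeq f (2*K)) a) := by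
    have e : gameSeq f (2*K+1) = gShapeUp (gameSeq f (2*K)) := by
      show gameSeq f (2*K+1) = _
      simp [gameSeq, Nat.mul_mod_right]
    rw [e]; rfl
  have h2K : hand (gameSeq f (2*K)) a = h := hstab _ (by omega)
  have h2K1 : hand (gameSeq f (2*K+1)) a = h := hstab _ (by omega)
  have hsu : shapeUp h = h := by rw [h2K] at e1; rw [← e1]; exact h2K1
  by_cases h0 : (h 0).2 = 3
  · -- the ship out round would change the hand
    have e2 : gameSeq f (2*K+2) = gShipOut (gameSeq f (2*K+1)) := by
      have e : (2*K+1) % 2 = 1 := by omega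
      simp [gameSeq, e]
    have h2K2 : hand (gameSeq f (2*K+2)) a = h := hstab _ (by omega)
    set g := gameSeq f (2*K+1) with hg
    have hga : hand g a = h := h2K1
    have hact : isActive g a := by
      refine ⟨?_, by rw [hga]; exact hb⟩
      show (hand g a 0).2 = 3
      rw [hga]; exact h0
    have key : hand (gameSeq f (2*K+2)) a (leftBad h) = request h := by
      rw [e2]
      show gShipOut g (a, leftBad h) = request h
      rw [gShipOut]
      simp only [if_pos (show isActive g a ∧ leftBad h = leftBad (hand g a) from ⟨hact, by rw [hga]⟩), hga]
    rw [h2K2] at key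
    have hlb : leftBad h ∈ badSpades h := by
      rw [leftBad, dif_pos hb]; exact Finset.min'_mem _ hb
    rw [badSpades, Finset.mem_filter] at hlb
    have hs2 := congrArg Prod.snd key
    simp only [request] at hs2
    rw [hlb.2.2] at hs2
    exact hlb.2.1 (sub_eq_self.mp hs2.symm)
  · -- the shape up round would change the hand
    have hss : (spadeSpots h).Nonempty := by
      obtain ⟨i, hi⟩ := hb
      rw [badSpades, Finset.mem_filter] at hi
      exact ⟨i, by rw [spadeSpots, Finset.mem_filter]; exact ⟨Finset.mem_univ _, hi.2.2⟩⟩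
    have hm : ((spadeSpots h).min' hss) ∈ spadeSpots h := Finset.min'_mem _ hss
    simp only [spadeSpots, Finset.mem_filter] at hm
    have : shapeUp h 0 = h ((spadeSpots h).min' hss) := by
      rw [shapeUp, dif_pos hss]
      simp [Equiv.swap_apply_left]
    rw [hsu] at this
    exact h0 (by rw [this]; exact hm.2)
end

section
/- The pointwise eventual limit of the game assignments defines an injection A × Fin 4 → B × Fin 4 in which, for every player, no spade occupies spots 1, 2, 3; restricting to spots 1, 2, 3 and the non-spade suits yields an injection A × Fin 3 → B × Fin 3. -/
open Finset

variable {A B : Type*}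

/-! ### Auxiliary lemmas -/

section Aux

lemma mem_badSpades_iff {h : Fin 4 → B × Fin 4} {i : Fin 4} :
    i ∈ badSpades h ↔ i ≠ 0 ∧ (h i).2 = 3 := by simp [badSpades]

lemma leftBad_mem {h : Fin 4 → B × Fin 4} (hb : (badSpades h).Nonempty) :
    leftBad h ∈ badSpades h := by
  rw [leftBad, dif_pos hb]; exact Finset.min'_mem _ _

lemma leftBad_ne_zero {h : Fin 4 → B × Fin 4} (hb : (badSpades h).Nonempty) :
    leftBad h ≠ 0 := (mem_badSpades_iff.1 (leftBad_mem hb)).1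

lemma leftBad_spade {h : Fin 4 → B × Fin 4} (hb : (badSpades h).Nonempty) :
    (h (leftBad h)).2 = 3 := (mem_badSpades_iff.1 (leftBad_mem hb)).2

lemma sub3_ne {i : Fin 4} (hi : i ≠ 0) : (3 - i : Fin 4) ≠ 3 := by
  revert hi; revert i; decide

lemma request_snd_ne {h : Fin 4 → B × Fin 4} (hb : (badSpades h).Nonempty) :
    (request h).2 ≠ 3 := by
  simpa [request] using sub3_ne (leftBad_ne_zero hb)

lemma shapeUp_perm (h : Fin 4 → B × Fin 4) :
    ∃ σ : Equiv.Perm (Fin 4), shapeUp h = h ∘ σ := by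
  rw [shapeUp]; split
  · exact ⟨_, rfl⟩
  · exact ⟨Equiv.refl _, rfl⟩

lemma shapeUp_of_topped {h : Fin 4 → B × Fin 4} (ht : (h 0).2 = 3) :
    shapeUp h = h := by
  have h0 : (0 : Fin 4) ∈ spadeSpots h := by simp [spadeSpots, ht]
  have hs : (spadeSpots h).Nonempty := ⟨0, h0⟩
  rw [shapeUp, dif_pos hs]
  have hmin : (spadeSpots h).min' hs = 0 :=
    le_antisymm (Finset.min'_le _ _ h0) (Fin.zero_le _)
  rw [hmin]
  simp

lemma shapeUp_zero_spade {h : Fin 4 → B × Fin 4} {i : Fin 4} (hi : (h i).2 = 3) :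
    (shapeUp h 0).2 = 3 := by
  have hs : (spadeSpots h).Nonempty := ⟨i, by simp [spadeSpots, hi]⟩
  rw [shapeUp, dif_pos hs]
  have hm : (spadeSpots h).min' hs ∈ spadeSpots h := Finset.min'_mem _ _
  simpa [spadeSpots, Equiv.swap_apply_left] using hm

lemma shapeUp_of_nospade {h : Fin 4 → B × Fin 4} (hn : ∀ i, (h i).2 ≠ 3) :
    shapeUp h = h := by
  rw [shapeUp, dif_neg]
  rintro ⟨j, hj⟩
  exact hn j (by simpa [spadeSpots] using hj)

lemma gShipOut_pos (f : A × Fin 4 → B × Fin 4) (p : A × Fin 4)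
    (h1 : isActive f p.1 ∧ p.2 = leftBad (hand f p.1)) :
    gShipOut f p = request (hand f p.1) := by
  rw [gShipOut, if_pos h1]

lemma gShipOut_of_not (f : A × Fin 4 → B × Fin 4) (p : A × Fin 4)
    (h1 : ¬(isActive f p.1 ∧ p.2 = leftBad (hand f p.1)))
    (h2 : ¬∃ a', isActive f a' ∧ request (hand f a') = f p) :
    gShipOut f p = f p := by
  rw [gShipOut, if_neg h1, dif_neg h2]

lemma gShipOut_cases (f : A × Fin 4 → B × Fin 4) (p : A × Fin 4) :
    gShipOut f p = f p ∨
    ((isActive f p.1 ∧ p.2 = leftBad (hand f p.1)) ∧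
      gShipOut f p = request (hand f p.1)) ∨
    (∃ a', isActive f a' ∧ request (hand f a') = f p ∧
      gShipOut f p = f (a', leftBad (hand f a'))) := by
  by_cases h1 : isActive f p.1 ∧ p.2 = leftBad (hand f p.1)
  · exact Or.inr (Or.inl ⟨h1, gShipOut_pos f p h1⟩)
  · by_cases h2 : ∃ a', isActive f a' ∧ request (hand f a') = f p
    · refine Or.inr (Or.inr ⟨h2.choose, h2.choose_spec.1, h2.choose_spec.2, ?_⟩)
      rw [gShipOut, if_neg h1, dif_pos h2]
    · exact Or.inl (gShipOut_of_not f p h1 h2)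

lemma active_lb_spade {f : A × Fin 4 → B × Fin 4} {a : A} (ha : isActive f a) :
    (f (a, leftBad (hand f a))).2 = 3 := leftBad_spade ha.2

lemma active_req_ne {f : A × Fin 4 → B × Fin 4} {a : A} (ha : isActive f a) :
    (request (hand f a)).2 ≠ 3 := request_snd_ne ha.2

lemma gShipOut_spot0 (f : A × Fin 4 → B × Fin 4) (a : A)
    (ht : (f (a, 0)).2 = 3) : gShipOut f (a, 0) = f (a, 0) := by
  refine gShipOut_of_not f (a, 0) ?_ ?_
  · rintro ⟨ha, h0⟩
    exact leftBad_ne_zero ha.2 h0.symm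
  · rintro ⟨a', ha', hr⟩
    exact active_req_ne ha' (by rw [hr]; exact ht)

lemma gShipOut_spade (f : A × Fin 4 → B × Fin 4) (a : A) (i : Fin 4)
    (h3 : (f (a, i)).2 = 3) (hna : ¬ isActive f a) :
    gShipOut f (a, i) = f (a, i) := by
  refine gShipOut_of_not f (a, i) ?_ ?_
  · rintro ⟨ha, -⟩; exact hna ha
  · rintro ⟨a', ha', hr⟩
    exact active_req_ne ha' (by rw [hr]; exact h3)

lemma request_inj {f : A × Fin 4 → B × Fin 4} (hf : Function.Injective f) {a b : A}
    (ha : isActive f a) (hb : isActive f b)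
    (hr : request (hand f a) = request (hand f b)) : a = b := by
  have h1 : (f (a, 0)).1 = (f (b, 0)).1 := by
    have := congrArg Prod.fst hr
    simpa [request, hand] using this
  have h2 : f (a, 0) = f (b, 0) := Prod.ext h1 (ha.1.trans hb.1.symm)
  exact congrArg Prod.fst (hf h2)

lemma hand_inj {f : A × Fin 4 → B × Fin 4} (hf : Function.Injective f) (a : A) :
    Function.Injective (hand f a) := by
  intro i j hij
  have := hf (show f (a, i) = f (a, j) from hij)
  exact congrArg Prod.snd this

lemma gShapeUp_inj {f : A × Fin 4 → B × Fin 4} (hf : Function.Injective f) :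
    Function.Injective (gShapeUp f) := by
  rintro ⟨a, i⟩ ⟨b, j⟩ h
  obtain ⟨σa, hσa⟩ := shapeUp_perm (hand f a)
  obtain ⟨σb, hσb⟩ := shapeUp_perm (hand f b)
  have e1 : gShapeUp f (a, i) = f (a, σa i) := by
    show shapeUp (hand f a) i = _
    rw [hσa]; rfl
  have e2 : gShapeUp f (b, j) = f (b, σb j) := by
    show shapeUp (hand f b) j = _
    rw [hσb]; rfl
  have hpair : (a, σa i) = (b, σb j) := hf (e1.symm.trans (h.trans e2))
  have hab : a = b := congrArg Prod.fst hpair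
  subst hab
  have hij : shapeUp (hand f a) i = shapeUp (hand f a) j := h
  have : Function.Injective (shapeUp (hand f a)) := by
    rw [hσa]
    exact (hand_inj hf a).comp σa.injective
  exact congrArg (Prod.mk a) (this hij)

lemma gShipOut_inj {f : A × Fin 4 → B × Fin 4} (hf : Function.Injective f) :
    Function.Injective (gShipOut f) := by
  have key : ∀ p q : A × Fin 4,
      (isActive f p.1 ∧ p.2 = leftBad (hand f p.1)) →
      gShipOut f p = gShipOut f q → p = q := by
    intro p q hp1 hpq
    have vp : gShipOut f p = request (hand f p.1) := gShipOut_pos f p hp1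
    by_cases hq1 : isActive f q.1 ∧ q.2 = leftBad (hand f q.1)
    · have vq : gShipOut f q = request (hand f q.1) := gShipOut_pos f q hq1
      have hr : request (hand f p.1) = request (hand f q.1) :=
        vp.symm.trans (hpq.trans vq)
      have hab : p.1 = q.1 := request_inj hf hp1.1 hq1.1 hr
      have : p.2 = q.2 := by rw [hp1.2, hq1.2, hab]
      exact Prod.ext hab this
    · by_cases hq2 : ∃ a', isActive f a' ∧ request (hand f a') = f q
      · have vq : gShipOut f q = f (hq2.choose, leftBad (hand f hq2.choose)) := by
          rw [gShipOut, if_neg hq1, dif_pos hq2]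
        have h3 : (request (hand f p.1)).2 = 3 := by
          rw [vp.symm.trans (hpq.trans vq)]
          exact active_lb_spade hq2.choose_spec.1
        exact absurd h3 (active_req_ne hp1.1)
      · have vq : gShipOut f q = f q := gShipOut_of_not f q hq1 hq2
        exact absurd ⟨p.1, hp1.1, vp.symm.trans (hpq.trans vq)⟩ hq2
  intro p q hpq
  by_cases hp1 : isActive f p.1 ∧ p.2 = leftBad (hand f p.1)
  · exact key p q hp1 hpq
  by_cases hq1 : isActive f q.1 ∧ q.2 = leftBad (hand f q.1)
  · exact (key q p hq1 hpq.symm).symm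
  by_cases hp2 : ∃ a', isActive f a' ∧ request (hand f a') = f p <;>
    by_cases hq2 : ∃ a', isActive f a' ∧ request (hand f a') = f q
  · have vp : gShipOut f p = f (hp2.choose, leftBad (hand f hp2.choose)) := by
      rw [gShipOut, if_neg hp1, dif_pos hp2]
    have vq : gShipOut f q = f (hq2.choose, leftBad (hand f hq2.choose)) := by
      rw [gShipOut, if_neg hq1, dif_pos hq2]
    have hcc : hp2.choose = hq2.choose :=
      congrArg Prod.fst (hf (vp.symm.trans (hpq.trans vq)))
    have : f p = f q := by
      rw [← hp2.choose_spec.2, ← hq2.choose_spec.2, hcc]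
    exact hf this
  · have vp : gShipOut f p = f (hp2.choose, leftBad (hand f hp2.choose)) := by
      rw [gShipOut, if_neg hp1, dif_pos hp2]
    have vq : gShipOut f q = f q := gShipOut_of_not f q hq1 hq2
    have hq : (hp2.choose, leftBad (hand f hp2.choose)) = q :=
      hf (vp.symm.trans (hpq.trans vq))
    exfalso
    apply hq1
    constructor
    · rw [← hq]; exact hp2.choose_spec.1
    · rw [← hq]
  · have vq : gShipOut f q = f (hq2.choose, leftBad (hand f hq2.choose)) := by
      rw [gShipOut, if_neg hq1, dif_pos hq2]
    have vp : gShipOut f p = f p := gShipOut_of_not f p hp1 hp2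
    have hp : (hq2.choose, leftBad (hand f hq2.choose)) = p :=
      hf (vq.symm.trans (hpq.symm.trans vp))
    exfalso
    apply hp1
    constructor
    · rw [← hp]; exact hq2.choose_spec.1
    · rw [← hp]
  · have vp : gShipOut f p = f p := gShipOut_of_not f p hp1 hp2
    have vq : gShipOut f q = f q := gShipOut_of_not f q hq1 hq2
    exact hf (vp.symm.trans (hpq.trans vq))

open Classical in
/-- Weight of a card sitting at spot `i` of a hand named `n`:
`0` if correct, `1` if a spade, `2` otherwise. -/
noncomputable def psi (n : B) (c : B × Fin 4) (i : Fin 4) : ℕ :=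
  if c = (n, 3 - i) then 0 else if c.2 = 3 then 1 else 2

lemma shipOut_psi {f : A × Fin 4 → B × Fin 4} (hf : Function.Injective f) (a : A)
    (ht : (f (a, 0)).2 = 3) (i : Fin 4) :
    psi (f (a, 0)).1 (gShipOut f (a, i)) i ≤ psi (f (a, 0)).1 (f (a, i)) i ∧
    (gShipOut f (a, i) ≠ f (a, i) →
      psi (f (a, 0)).1 (gShipOut f (a, i)) i < psi (f (a, 0)).1 (f (a, i)) i) := by
  rcases gShipOut_cases f (a, i) with hc | ⟨⟨ha, hi⟩, hv⟩ | ⟨a', ha', hr, hv⟩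
  · rw [hc]; exact ⟨le_rfl, fun h => absurd rfl h⟩
  · have hi' : i = leftBad (hand f a) := hi
    have hi0 : i ≠ 0 := by rw [hi']; exact leftBad_ne_zero ha.2
    have hold : (f (a, i)).2 = 3 := by rw [hi']; exact active_lb_spade ha
    have holdne : f (a, i) ≠ ((f (a, 0)).1, 3 - i) := by
      intro h
      have h2 := congrArg Prod.snd h
      rw [hold] at h2
      exact sub3_ne hi0 h2.symm
    have hnew : gShipOut f (a, i) = ((f (a, 0)).1, 3 - i) := by
      rw [hv, request, ← hi']; rfl
    have l : psi (f (a, 0)).1 (gShipOut f (a, i)) i = 0 := by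
      rw [psi, if_pos hnew]
    have r : psi (f (a, 0)).1 (f (a, i)) i = 1 := by
      rw [psi, if_neg holdne, if_pos hold]
    exact ⟨by omega, fun _ => by omega⟩
  · have hnew3 : (gShipOut f (a, i)).2 = 3 := by rw [hv]; exact active_lb_spade ha'
    have holdn : (f (a, i)).2 ≠ 3 := by rw [← hr]; exact active_req_ne ha'
    have holdne : f (a, i) ≠ ((f (a, 0)).1, 3 - i) := by
      intro h
      have hn : (f (a', 0)).1 = (f (a, 0)).1 := by
        have h1 := congrArg Prod.fst hr
        simp only [request, hand] at h1
        rw [h1]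
        simpa using congrArg Prod.fst h
      have h2 : f (a', 0) = f (a, 0) := Prod.ext hn (ha'.1.trans ht.symm)
      have haa : a' = a := congrArg Prod.fst (hf h2)
      subst haa
      have h3 : (3 - leftBad (hand f a') : Fin 4) = 3 - i := by
        have h4 := congrArg Prod.snd hr
        simp only [request] at h4
        rw [h4, h]
      have hlb : leftBad (hand f a') = i := sub_right_injective h3
      have : (f (a', i)).2 = 3 := by rw [← hlb]; exact active_lb_spade ha'
      exact holdn this
    have r : psi (f (a, 0)).1 (f (a, i)) i = 2 := by
      rw [psi, if_neg holdne, if_neg holdn]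
    have l : psi (f (a, 0)).1 (gShipOut f (a, i)) i ≤ 1 := by
      rw [psi]
      split_ifs <;> omega
    exact ⟨by omega, fun _ => by omega⟩

lemma nat_eventually_const (u : ℕ → ℕ) (hu : ∀ k, u (k + 1) ≤ u k) :
    ∃ K, ∀ k, K ≤ k → u k = u K := by
  have hne : Set.Nonempty (Set.range u) := ⟨u 0, 0, rfl⟩
  obtain ⟨K, hK⟩ := Nat.sInf_mem hne
  refine ⟨K, fun k hk => ?_⟩
  have h1 : u k ≤ u K := by
    induction k, hk using Nat.le_induction with
    | base => exact le_rfl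
    | succ k hk ih => exact (hu k).trans ih
  have h2 : u K ≤ u k := hK ▸ Nat.sInf_le ⟨k, rfl⟩
  omega

lemma gameSeq_succ_even (f : A × Fin 4 → B × Fin 4) {k : ℕ} (hk : k % 2 = 0) :
    gameSeq f (k + 1) = gShapeUp (gameSeq f k) := by
  simp [gameSeq, hk]

lemma gameSeq_succ_odd (f : A × Fin 4 → B × Fin 4) {k : ℕ} (hk : k % 2 = 1) :
    gameSeq f (k + 1) = gShipOut (gameSeq f k) := by
  simp [gameSeq, hk]

lemma gameSeq_inj {f : A × Fin 4 → B × Fin 4} (hf : Function.Injective f) :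
    ∀ k, Function.Injective (gameSeq f k) := by
  intro k
  induction k with
  | zero => exact hf
  | succ k ih =>
    rcases Nat.mod_two_eq_zero_or_one k with hk | hk
    · rw [gameSeq_succ_even f hk]; exact gShapeUp_inj ih
    · rw [gameSeq_succ_odd f hk]; exact gShipOut_inj ih

end Aux

/-- The pointwise eventual limit of the game is an injection `A × Fin 4 → B × Fin 4`
with no spade in spots `1, 2, 3`; restricting to those spots and the non-spade
suits yields an injection `A × Fin 3 → B × Fin 3`. -/
theorem limit_injection (f : A × Fin 4 → B × Fin 4)
    (hf : Function.Injective f) :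
    ∃ g : A × Fin 4 → B × Fin 4,
      (∀ a : A, ∃ K, ∀ k, K ≤ k → hand (gameSeq f k) a = fun i => g (a, i)) ∧
      Function.Injective g ∧
      (∀ (a : A) (i : Fin 4), i ≠ 0 → (g (a, i)).2 ≠ 3) ∧
      ∃ g' : A × Fin 3 → B × Fin 3, Function.Injective g' ∧
        ∀ (a : A) (i : Fin 3), (g' (a, i)).1 = (g (a, i.succ)).1 ∧
          ((g' (a, i)).2 : ℕ) = ((g (a, i.succ)).2 : ℕ) := by
  classical
  have inj : ∀ k, Function.Injective (gameSeq f k) := gameSeq_inj hf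
  -- Each hand eventually stabilizes.
  have key : ∀ a : A, ∃ K, ∀ k, K ≤ k → ∀ i, gameSeq f k (a, i) = gameSeq f K (a, i) := by
    intro a
    by_cases htop : ∃ t, (gameSeq f t (a, 0)).2 = 3
    · obtain ⟨t, ht⟩ := htop
      -- the card in spot 0 is constant from time t on
      have spot0 : ∀ k, t ≤ k → gameSeq f k (a, 0) = gameSeq f t (a, 0) := by
        intro k hk
        induction k, hk using Nat.le_induction with
        | base => rfl
        | succ k hk ih =>
          have htk : (gameSeq f k (a, 0)).2 = 3 := by rw [ih]; exact ht
          have hstep : gameSeq f (k + 1) (a, 0) = gameSeq f k (a, 0) := by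
            rcases Nat.mod_two_eq_zero_or_one k with hk2 | hk2
            · rw [gameSeq_succ_even f hk2]
              show shapeUp (hand (gameSeq f k) a) 0 = _
              rw [shapeUp_of_topped htk]; rfl
            · rw [gameSeq_succ_odd f hk2]
              exact gShipOut_spot0 (gameSeq f k) a htk
          rw [hstep, ih]
      have topk : ∀ k, t ≤ k → (gameSeq f k (a, 0)).2 = 3 := by
        intro k hk; rw [spot0 k hk]; exact ht
      set n := (gameSeq f t (a, 0)).1 with hn
      have phi_step : ∀ k, t ≤ k →
          ((∑ i : Fin 4, psi n (gameSeq f (k + 1) (a, i)) i) ≤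
            ∑ i : Fin 4, psi n (gameSeq f k (a, i)) i) ∧
          ((∃ i, gameSeq f (k + 1) (a, i) ≠ gameSeq f k (a, i)) →
            (∑ i : Fin 4, psi n (gameSeq f (k + 1) (a, i)) i) <
              ∑ i : Fin 4, psi n (gameSeq f k (a, i)) i) := by
        intro k hk
        rcases Nat.mod_two_eq_zero_or_one k with hk2 | hk2
        · have heq : ∀ i, gameSeq f (k + 1) (a, i) = gameSeq f k (a, i) := by
            intro i
            rw [gameSeq_succ_even f hk2]
            show shapeUp (hand (gameSeq f k) a) i = _
            rw [shapeUp_of_topped (topk k hk)]; rfl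
          constructor
          · exact le_of_eq (Finset.sum_congr rfl fun i _ => by rw [heq i])
          · rintro ⟨i, hi⟩; exact absurd (heq i) hi
        · have hname : (gameSeq f k (a, 0)).1 = n := by rw [spot0 k hk]
          have hpsi := fun i => shipOut_psi (inj k) a (topk k hk) i
          simp only [hname] at hpsi
          constructor
          · rw [gameSeq_succ_odd f hk2]
            exact Finset.sum_le_sum fun i _ => (hpsi i).1
          · rintro ⟨i, hi⟩
            rw [gameSeq_succ_odd f hk2] at hi ⊢
            exact Finset.sum_lt_sum (fun j _ => (hpsi j).1)
              ⟨i, Finset.mem_univ i, (hpsi i).2 hi⟩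
      obtain ⟨J, hJ⟩ := nat_eventually_const
        (fun j => ∑ i : Fin 4, psi n (gameSeq f (t + j) (a, i)) i)
        (fun j => (phi_step (t + j) (Nat.le_add_right t j)).1)
      refine ⟨t + J, fun k hk => ?_⟩
      induction k, hk using Nat.le_induction with
      | base => intro i; rfl
      | succ k hk ih =>
        have hphik : (∑ i : Fin 4, psi n (gameSeq f k (a, i)) i) =
            ∑ i : Fin 4, psi n (gameSeq f (t + J) (a, i)) i := by
          have h1 := hJ (k - t) (by omega)
          have h2 := hJ J le_rfl
          simp only [show t + (k - t) = k by omega] at h1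
          rw [h1, h2]
        have hphik1 : (∑ i : Fin 4, psi n (gameSeq f (k + 1) (a, i)) i) =
            ∑ i : Fin 4, psi n (gameSeq f (t + J) (a, i)) i := by
          have h1 := hJ (k + 1 - t) (by omega)
          have h2 := hJ J le_rfl
          simp only [show t + (k + 1 - t) = k + 1 by omega] at h1
          rw [h1, h2]
        have hnochange : ∀ j, gameSeq f (k + 1) (a, j) = gameSeq f k (a, j) := by
          by_contra hcon
          push_neg at hcon
          have := (phi_step k (by omega)).2 hcon
          omega
        intro i
        rw [hnochange i, ih i]
    · push_neg at htop
      have nospade : ∀ k i, (gameSeq f k (a, i)).2 ≠ 3 := by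
        intro k i hs
        rcases Nat.mod_two_eq_zero_or_one k with hk2 | hk2
        · apply htop (k + 1)
          rw [gameSeq_succ_even f hk2]
          exact shapeUp_zero_spade hs
        · have h1 : gameSeq f (k + 1) (a, i) = gameSeq f k (a, i) := by
            rw [gameSeq_succ_odd f hk2]
            exact gShipOut_spade (gameSeq f k) a i hs (fun hA => htop k hA.1)
          apply htop (k + 2)
          have hk2' : (k + 1) % 2 = 0 := by omega
          rw [show k + 2 = (k + 1) + 1 from rfl, gameSeq_succ_even f hk2']
          have h2 : (hand (gameSeq f (k + 1)) a i).2 = 3 := by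
            show (gameSeq f (k + 1) (a, i)).2 = 3
            rw [h1]; exact hs
          exact shapeUp_zero_spade h2
      have const : ∀ k i, gameSeq f k (a, i) = gameSeq f 0 (a, i) := by
        intro k
        induction k with
        | zero => intro i; rfl
        | succ k ih =>
          intro i
          have hstep : gameSeq f (k + 1) (a, i) = gameSeq f k (a, i) := by
            rcases Nat.mod_two_eq_zero_or_one k with hk2 | hk2
            · rw [gameSeq_succ_even f hk2]
              show shapeUp (hand (gameSeq f k) a) i = _
              have hn' : ∀ j, (hand (gameSeq f k) a j).2 ≠ 3 := fun j => nospade k j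
              rw [shapeUp_of_nospade hn']; rfl
            · rw [gameSeq_succ_odd f hk2]
              rcases gShipOut_cases (gameSeq f k) (a, i) with hc | ⟨⟨hA, -⟩, -⟩ |
                ⟨a', ha', hr, hv⟩
              · exact hc
              · exact absurd hA.1 (htop k)
              · exfalso
                apply nospade (k + 1) i
                rw [gameSeq_succ_odd f hk2, hv]
                exact active_lb_spade ha'
          rw [hstep, ih i]
      exact ⟨0, fun k _ i => const k i⟩
  choose K hK using key
  -- the limit assignment
  have ginj : Function.Injective (fun p : A × Fin 4 => gameSeq f (K p.1) p) := by
    rintro ⟨a, i⟩ ⟨b, j⟩ hg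
    have h1 : gameSeq f (max (K a) (K b)) (a, i) = gameSeq f (K a) (a, i) :=
      hK a _ (le_max_left _ _) i
    have h2 : gameSeq f (max (K a) (K b)) (b, j) = gameSeq f (K b) (b, j) :=
      hK b _ (le_max_right _ _) j
    exact inj _ (h1.trans (hg.trans h2.symm))
  have hns : ∀ (a : A) (i : Fin 4), i ≠ 0 → (gameSeq f (K a) (a, i)).2 ≠ 3 := by
    intro a i hi0 hsp
    set k := 2 * K a + 1 with hk
    have hKk : K a ≤ k := by omega
    have hval : ∀ j : Fin 4, gameSeq f k (a, j) = gameSeq f (K a) (a, j) :=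
      fun j => hK a k hKk j
    have hsk : (gameSeq f k (a, i)).2 = 3 := by rw [hval i]; exact hsp
    have hk2 : (2 * K a) % 2 = 0 := by omega
    have e1 : gameSeq f k = gShapeUp (gameSeq f (2 * K a)) := gameSeq_succ_even f hk2
    have htopk : (gameSeq f k (a, 0)).2 = 3 := by
      obtain ⟨σ, hσ⟩ := shapeUp_perm (hand (gameSeq f (2 * K a)) a)
      have h3 : (hand (gameSeq f (2 * K a)) a (σ i)).2 = 3 := by
        have h4 : gameSeq f k (a, i) = hand (gameSeq f (2 * K a)) a (σ i) := by
          rw [e1]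
          show shapeUp (hand (gameSeq f (2 * K a)) a) i = _
          rw [hσ]; rfl
        rw [← h4]; exact hsk
      rw [e1]
      exact shapeUp_zero_spade h3
    have hact : isActive (gameSeq f k) a :=
      ⟨htopk, ⟨i, mem_badSpades_iff.2 ⟨hi0, hsk⟩⟩⟩
    have hodd : k % 2 = 1 := by omega
    have e2 : gameSeq f (k + 1) (a, leftBad (hand (gameSeq f k) a)) =
        request (hand (gameSeq f k) a) := by
      rw [gameSeq_succ_odd f hodd]
      exact gShipOut_pos _ (a, leftBad (hand (gameSeq f k) a)) ⟨hact, rfl⟩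
    have hlb3 : (gameSeq f k (a, leftBad (hand (gameSeq f k) a))).2 = 3 :=
      active_lb_spade hact
    have hlbK : gameSeq f (k + 1) (a, leftBad (hand (gameSeq f k) a)) =
        gameSeq f k (a, leftBad (hand (gameSeq f k) a)) := by
      rw [hK a (k + 1) (by omega), ← hval]
    rw [hlbK] at e2
    have : (gameSeq f k (a, leftBad (hand (gameSeq f k) a))).2 ≠ 3 := by
      rw [e2]; exact active_req_ne hact
    exact this hlb3
  have hle2 : ∀ (a : A) (i : Fin 3), ((gameSeq f (K a) (a, i.succ)).2 : ℕ) ≤ 2 := by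
    intro a i
    have h1 := hns a i.succ (Fin.succ_ne_zero i)
    have h2 : ((gameSeq f (K a) (a, i.succ)).2 : ℕ) ≠ 3 := fun h => h1 (Fin.ext h)
    have h3 := (gameSeq f (K a) (a, i.succ)).2.isLt
    omega
  refine ⟨fun p => gameSeq f (K p.1) p, ?_, ginj, hns, ?_⟩
  · intro a
    exact ⟨K a, fun k hk => funext fun i => hK a k hk i⟩
  · refine ⟨fun p => ((gameSeq f (K p.1) (p.1, p.2.succ)).1,
      ⟨min ((gameSeq f (K p.1) (p.1, p.2.succ)).2 : ℕ) 2,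
        lt_of_le_of_lt (min_le_right _ 2) (by norm_num)⟩), ?_, ?_⟩
    · rintro ⟨a, i⟩ ⟨b, j⟩ h
      have h1 := congrArg Prod.fst h
      have h2 := congrArg (fun x : B × Fin 3 => (x.2 : ℕ)) h
      dsimp only at h1 h2
      rw [min_eq_left (hle2 a i), min_eq_left (hle2 b j)] at h2
      have h4 : (gameSeq f (K a) (a, i.succ)).2 = (gameSeq f (K b) (b, j.succ)).2 :=
        Fin.ext h2
      have h5 : (a, i.succ) = ((b, j.succ) : A × Fin 4) :=
        ginj (Prod.ext h1 h4)
      have hab : a = b := congrArg Prod.fst h5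
      have hij : i = j := Fin.succ_injective _ (congrArg Prod.snd h5)
      rw [hab, hij]
    · intro a i
      exact ⟨rfl, min_eq_left (hle2 a i)⟩
end
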